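/- arXiv:1807.02633 — 4 statements merged into one kernel-verified Lean document; each statement's English description precedes it below -/
import Mathlib

section
/- For every integer d ≥ 3, the constant C(d) = (16/Γ(d/2)) ∫₀^∞ ρ^{d+1} (2(d-2) + 4ρ²)^{-1} e^{-ρ²} dρ satisfies C(d) < 2, and moreover C(2) = 2. -/
/-!
Since `2(d - 2) ≥ 0`, the integrand is at most `ρ^{d-1} e^{-ρ²} / 4`, strictly so for `d ≥ 3`
and with equality for `d = 2`. The dominating integral is the Gamma integral
`∫₀^∞ ρ^{d-1} e^{-ρ²} dρ = Γ(d/2) / 2`, so the prefactor `16 / Γ(d/2)` turns the bound into `2`.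
-/

open MeasureTheory Real Set

theorem setIntegral_lt_setIntegral_of_forall_lt {X : Type*} [MeasurableSpace X] {μ : Measure X}
    {s : Set X} {f g : X → ℝ} (hs : MeasurableSet s) (hμs : μ s ≠ 0)
    (hf : IntegrableOn f s μ) (hg : IntegrableOn g s μ) (hfg : ∀ x ∈ s, f x < g x) :
    ∫ x in s, f x ∂μ < ∫ x in s, g x ∂μ := by
  rw [← sub_pos, ← integral_sub hg hf]
  refine (setIntegral_pos_iff_support_of_nonneg_ae ?_ (hg.sub hf)).2 ?_
  · filter_upwards [ae_restrict_mem hs] with x hx using sub_nonneg.2 (hfg x hx).le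
  · rw [(inter_eq_right (s := Function.support (g - f))).2
      fun x hx => sub_ne_zero.2 (hfg x hx).ne']
    exact pos_iff_ne_zero.2 hμs

theorem integrableOn_pow_mul_exp_neg_sq (n : ℕ) :
    IntegrableOn (fun x : ℝ => x ^ n * exp (-x ^ 2)) (Ioi 0) := by
  simpa only [rpow_natCast, rpow_two] using
    integrableOn_rpow_mul_exp_neg_rpow (p := 2) (s := n) (by linarith [n.cast_nonneg (α := ℝ)])
      two_pos

theorem integral_pow_mul_exp_neg_sq (n : ℕ) :
    ∫ x in Ioi (0 : ℝ), x ^ n * exp (-x ^ 2) = Gamma ((n + 1) / 2) / 2 := by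
  simpa only [rpow_natCast, rpow_two, one_div, inv_mul_eq_div] using
    integral_rpow_mul_exp_neg_rpow (p := 2) (q := n) two_pos
      (by linarith [n.cast_nonneg (α := ℝ)])

theorem pow_add_two_mul_inv_four_mul_sq {x : ℝ} (hx : x ≠ 0) (n : ℕ) :
    x ^ (n + 2) * (4 * x ^ 2)⁻¹ = x ^ n / 4 := by
  field_simp
  ring

theorem pow_add_two_mul_inv_lt {x c : ℝ} (hx : 0 < x) (hc : 0 < c) (n : ℕ) :
    x ^ (n + 2) * (c + 4 * x ^ 2)⁻¹ < x ^ n / 4 := by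
  rw [← pow_add_two_mul_inv_four_mul_sq hx.ne']
  gcongr
  linarith

theorem integral_pow_add_two_mul_inv_four_mul_sq_mul_exp (n : ℕ) :
    ∫ x in Ioi (0 : ℝ), x ^ (n + 2) * (4 * x ^ 2)⁻¹ * exp (-x ^ 2) =
      Gamma ((n + 1) / 2) / 8 := by
  calc ∫ x in Ioi (0 : ℝ), x ^ (n + 2) * (4 * x ^ 2)⁻¹ * exp (-x ^ 2)
      = ∫ x in Ioi (0 : ℝ), 4⁻¹ * (x ^ n * exp (-x ^ 2)) := by
        refine setIntegral_congr_fun measurableSet_Ioi fun x hx => ?_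
        rw [pow_add_two_mul_inv_four_mul_sq (ne_of_gt hx)]
        ring
    _ = Gamma ((n + 1) / 2) / 8 := by
        rw [integral_const_mul, integral_pow_mul_exp_neg_sq]
        ring

theorem integral_pow_add_two_mul_inv_add_mul_exp_lt {c : ℝ} (hc : 0 < c) (n : ℕ) :
    ∫ x in Ioi (0 : ℝ), x ^ (n + 2) * (c + 4 * x ^ 2)⁻¹ * exp (-x ^ 2) <
      Gamma ((n + 1) / 2) / 8 := by
  have hlt : ∀ x ∈ Ioi (0 : ℝ), x ^ (n + 2) * (c + 4 * x ^ 2)⁻¹ * exp (-x ^ 2)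
      < 4⁻¹ * (x ^ n * exp (-x ^ 2)) := fun x hx => by
    rw [← mul_assoc, inv_mul_eq_div]
    gcongr
    exact pow_add_two_mul_inv_lt hx hc n
  have hdom : IntegrableOn (fun x : ℝ => 4⁻¹ * (x ^ n * exp (-x ^ 2))) (Ioi 0) :=
    (integrableOn_pow_mul_exp_neg_sq n).const_mul _
  have hint :
      IntegrableOn (fun x : ℝ => x ^ (n + 2) * (c + 4 * x ^ 2)⁻¹ * exp (-x ^ 2)) (Ioi 0) := by
    refine hdom.mono' (by fun_prop) ?_
    filter_upwards [ae_restrict_mem measurableSet_Ioi] with x (hx : 0 < x)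
    rw [norm_of_nonneg (by positivity)]
    exact (hlt x hx).le
  calc _ < ∫ x in Ioi (0 : ℝ), 4⁻¹ * (x ^ n * exp (-x ^ 2)) :=
        setIntegral_lt_setIntegral_of_forall_lt measurableSet_Ioi (by simp) hint hdom hlt
    _ = Gamma ((n + 1) / 2) / 8 := by
        rw [integral_const_mul, integral_pow_mul_exp_neg_sq]
        ring

/-- The constant `C(d) = (16/Γ(d/2)) ∫₀^∞ ρ^{d+1}(2(d-2)+4ρ²)^{-1} e^{-ρ²} dρ`
satisfies `C(d) < 2` for `d ≥ 3`, and `C(2) = 2`. -/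
theorem C_d_lt_two
    (C : ℕ → ℝ)
    (hC : ∀ d : ℕ, 2 ≤ d → C d = 16 / Real.Gamma ((d : ℝ) / 2) *
      ∫ ρ in Set.Ioi (0 : ℝ),
        ρ ^ (d + 1) * (2 * ((d : ℝ) - 2) + 4 * ρ ^ 2)⁻¹ * Real.exp (-ρ ^ 2)) :
    (∀ d : ℕ, 3 ≤ d → C d < 2) ∧ C 2 = 2 := by
  refine ⟨fun d hd => ?_, ?_⟩
  · obtain ⟨n, rfl⟩ : ∃ n, d = n + 1 := ⟨d - 1, by omega⟩
    have hn : (2 : ℝ) ≤ n := by exact_mod_cast (by omega : 2 ≤ n)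
    have hΓ : 0 < Gamma ((n + 1) / 2) := Gamma_pos_of_pos (by positivity)
    have hI :=
      integral_pow_add_two_mul_inv_add_mul_exp_lt (c := 2 * ((n + 1 : ℝ) - 2)) (by linarith) n
    rw [hC _ (by omega)]
    push_cast
    calc _ < 16 / Gamma ((n + 1) / 2) * (Gamma ((n + 1) / 2) / 8) := by gcongr
      _ = 2 := by field_simp; norm_num
  · have hI := integral_pow_add_two_mul_inv_four_mul_sq_mul_exp 1
    rw [hC 2 le_rfl]
    norm_num at hI ⊢
    rw [hI]
    norm_num
end

section
/- Let R : (0,∞) → (0,∞) be given by the subordination formula R(ρ) = ∫₀^∞ f(λ) (4πλ)^{-d/2} e^{-ρ²/(4λ)} dλ with f ≥ 0 measurable and the integral finite for all ρ > 0. Then R'(ρ) < 0 for all ρ > 0 (assuming f not a.e. zero), and ρ R''(ρ) - R'(ρ) ≥ 0 for all ρ > 0. -/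
open MeasureTheory Real

/-!
Both signs are read off pointwise from the integrands. Writing
`K_λ(ρ) = (4πλ)^{-d/2} e^{-ρ²/(4λ)}` (`heatKernelProfile d λ ρ`),
`R'(ρ) = -∫ f(λ) K_λ(ρ) ρ/(2λ) dλ` has a positive integrand wherever `f(λ) ≠ 0`, and
`ρ R''(ρ) - R'(ρ) = ∫ f(λ) K_λ(ρ) ρ³/(4λ²) dλ` has a nonnegative one.
-/

open Set Function

noncomputable def heatKernelProfile (d : ℕ) (t ρ : ℝ) : ℝ :=
  (4 * π * t) ^ (-(d : ℝ) / 2) * exp (-ρ ^ 2 / (4 * t))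

lemma heatKernelProfile_pos (d : ℕ) {t : ℝ} (ht : 0 < t) (ρ : ℝ) :
    0 < heatKernelProfile d t ρ :=
  mul_pos (rpow_pos_of_pos (by positivity) _) (exp_pos _)

theorem setIntegral_mul_pos_of_not_ae_eq_zero {α : Type*} [MeasurableSpace α] {μ : Measure α}
    {s : Set α} (hs : MeasurableSet s) {f w : α → ℝ}
    (hfw : IntegrableOn (fun x => f x * w x) s μ) (hf : ∀ x ∈ s, 0 ≤ f x)
    (hw : ∀ x ∈ s, 0 < w x) (hf_ne : ¬ ∀ᵐ x ∂μ.restrict s, f x = 0) :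
    0 < ∫ x in s, f x * w x ∂μ := by
  have hfw_nonneg : 0 ≤ᵐ[μ.restrict s] fun x => f x * w x :=
    (ae_restrict_iff' hs).2 (.of_forall fun x hx => mul_nonneg (hf x hx) (hw x hx).le)
  have hsupp : {x | f x ≠ 0} ∩ s ⊆ support (fun x => f x * w x) ∩ s :=
    fun x ⟨hfx, hx⟩ => ⟨mul_ne_zero hfx (hw x hx).ne', hx⟩
  rw [setIntegral_pos_iff_support_of_nonneg_ae hfw_nonneg hfw]
  rw [ae_iff, Measure.restrict_apply' hs] at hf_ne
  exact (pos_iff_ne_zero.2 hf_ne).trans_le (measure_mono hsupp)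

theorem subordinated_profile_derivatives_general (d : ℕ)
    (f : ℝ → ℝ) (hf_nonneg : ∀ l, 0 ≤ f l)
    (hf_ne : ¬ (∀ᵐ l ∂(volume.restrict (Set.Ioi (0 : ℝ))), f l = 0))
    (R : ℝ → ℝ)
    (hR' : ∀ ρ : ℝ, 0 < ρ → deriv R ρ =
      ∫ l in Set.Ioi (0 : ℝ),
        f l * (4 * Real.pi * l) ^ (-(d : ℝ) / 2) * (-(ρ / (2 * l))) *
          Real.exp (-ρ ^ 2 / (4 * l)))
    (hR'_int : ∀ ρ : ℝ, 0 < ρ → IntegrableOn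
      (fun l => f l * (4 * Real.pi * l) ^ (-(d : ℝ) / 2) * (-(ρ / (2 * l))) *
        Real.exp (-ρ ^ 2 / (4 * l))) (Set.Ioi (0 : ℝ)))
    (hR'' : ∀ ρ : ℝ, 0 < ρ → deriv (deriv R) ρ =
      ∫ l in Set.Ioi (0 : ℝ),
        f l * (4 * Real.pi * l) ^ (-(d : ℝ) / 2) *
          (ρ ^ 2 / (4 * l ^ 2) - 1 / (2 * l)) * Real.exp (-ρ ^ 2 / (4 * l)))
    (hR''_int : ∀ ρ : ℝ, 0 < ρ → IntegrableOn
      (fun l => f l * (4 * Real.pi * l) ^ (-(d : ℝ) / 2) *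
        (ρ ^ 2 / (4 * l ^ 2) - 1 / (2 * l)) * Real.exp (-ρ ^ 2 / (4 * l)))
      (Set.Ioi (0 : ℝ))) :
    ∀ ρ : ℝ, 0 < ρ →
      deriv R ρ < 0 ∧ 0 ≤ ρ * deriv (deriv R) ρ - deriv R ρ := by
  intro ρ hρ
  have hR'_eq : deriv R ρ = -∫ l in Ioi 0, f l * (heatKernelProfile d l ρ * (ρ / (2 * l))) := by
    rw [hR' ρ hρ, ← integral_neg]
    congr 1 with l
    unfold heatKernelProfile
    ring
  have hR'_int' : IntegrableOn (fun l => f l * (heatKernelProfile d l ρ * (ρ / (2 * l)))) (Ioi 0) :=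
    (hR'_int ρ hρ).neg.congr_fun (fun l _ => by simp only [Pi.neg_apply, heatKernelProfile]; ring) measurableSet_Ioi
  have hcomb : ρ * deriv (deriv R) ρ - deriv R ρ =
      ∫ l in Ioi 0, f l * (heatKernelProfile d l ρ * (ρ ^ 3 / (4 * l ^ 2))) := by
    rw [hR' ρ hρ, hR'' ρ hρ, ← integral_const_mul,
      ← integral_sub ((hR''_int ρ hρ).const_mul ρ) (hR'_int ρ hρ)]
    refine setIntegral_congr_fun measurableSet_Ioi fun l (hl : 0 < l) => ?_
    unfold heatKernelProfile
    field_simp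
    ring
  refine ⟨?_, ?_⟩
  · rw [hR'_eq, neg_lt_zero]
    exact setIntegral_mul_pos_of_not_ae_eq_zero measurableSet_Ioi hR'_int' (fun l _ => hf_nonneg l)
      (fun l (hl : 0 < l) => mul_pos (heatKernelProfile_pos d hl ρ) (by positivity)) hf_ne
  · rw [hcomb]
    exact setIntegral_nonneg measurableSet_Ioi fun l (hl : 0 < l) =>
      mul_nonneg (hf_nonneg l) (mul_nonneg (heatKernelProfile_pos d hl ρ).le (by positivity))

/-- For the subordinated radial profile
`R(ρ) = ∫₀^∞ f(λ)(4πλ)^{-d/2} e^{-ρ²/(4λ)} dλ` with `f ≥ 0` not a.e. zero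
(differentiation under the integral sign being assumed), one has `R'(ρ) < 0`
and `ρR''(ρ) - R'(ρ) ≥ 0` for every `ρ > 0`. -/
theorem subordinated_profile_derivatives (d : ℕ) (hd : 1 ≤ d)
    (f : ℝ → ℝ) (hf_meas : Measurable f) (hf_nonneg : ∀ l, 0 ≤ f l)
    (hf_ne : ¬ (∀ᵐ l ∂(volume.restrict (Set.Ioi (0 : ℝ))), f l = 0))
    (R : ℝ → ℝ)
    (hR : ∀ ρ : ℝ, 0 < ρ → R ρ =
      ∫ l in Set.Ioi (0 : ℝ),
        f l * (4 * Real.pi * l) ^ (-(d : ℝ) / 2) * Real.exp (-ρ ^ 2 / (4 * l)))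
    (hR_int : ∀ ρ : ℝ, 0 < ρ → IntegrableOn
      (fun l => f l * (4 * Real.pi * l) ^ (-(d : ℝ) / 2) * Real.exp (-ρ ^ 2 / (4 * l)))
      (Set.Ioi (0 : ℝ)))
    (hR' : ∀ ρ : ℝ, 0 < ρ → deriv R ρ =
      ∫ l in Set.Ioi (0 : ℝ),
        f l * (4 * Real.pi * l) ^ (-(d : ℝ) / 2) * (-(ρ / (2 * l))) *
          Real.exp (-ρ ^ 2 / (4 * l)))
    (hR'_int : ∀ ρ : ℝ, 0 < ρ → IntegrableOn
      (fun l => f l * (4 * Real.pi * l) ^ (-(d : ℝ) / 2) * (-(ρ / (2 * l))) *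
        Real.exp (-ρ ^ 2 / (4 * l))) (Set.Ioi (0 : ℝ)))
    (hR'' : ∀ ρ : ℝ, 0 < ρ → deriv (deriv R) ρ =
      ∫ l in Set.Ioi (0 : ℝ),
        f l * (4 * Real.pi * l) ^ (-(d : ℝ) / 2) *
          (ρ ^ 2 / (4 * l ^ 2) - 1 / (2 * l)) * Real.exp (-ρ ^ 2 / (4 * l)))
    (hR''_int : ∀ ρ : ℝ, 0 < ρ → IntegrableOn
      (fun l => f l * (4 * Real.pi * l) ^ (-(d : ℝ) / 2) *
        (ρ ^ 2 / (4 * l ^ 2) - 1 / (2 * l)) * Real.exp (-ρ ^ 2 / (4 * l)))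
      (Set.Ioi (0 : ℝ))) :
    ∀ ρ : ℝ, 0 < ρ →
      deriv R ρ < 0 ∧ 0 ≤ ρ * deriv (deriv R) ρ - deriv R ρ :=
  subordinated_profile_derivatives_general d f hf_nonneg hf_ne R hR' hR'_int hR'' hR''_int
end

section
/- Suppose R : (0,∞) → (0,∞) is smooth with R' < 0 and ρR''(ρ) - R'(ρ) ≥ 0 for all ρ > 0, and σ_d ∫₀^∞ |R'(ρ)| ρ^d dρ = d. Then the constant C_α(d) = 2σ_d ∫₀^∞ |R'(ρ)|² / |∂_ρ(ρ^{1-d} R'(ρ))| dρ satisfies C_α(d) ≤ 2d/(d-2) for d ≥ 3. -/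
open MeasureTheory Real Set

/-- If `R : (0,∞) → (0,∞)` is smooth with `R' < 0`, `ρR''(ρ) - R'(ρ) ≥ 0`,
and normalized by `σ_d ∫₀^∞ |R'(ρ)| ρ^d dρ = d`, then the constant
`C_α(d) = 2σ_d ∫₀^∞ |R'(ρ)|²/|∂_ρ(ρ^{1-d}R'(ρ))| dρ` satisfies
`C_α(d) ≤ 2d/(d-2)` for `d ≥ 3`. -/
theorem C_alpha_upper_bound (d : ℕ) (hd : 3 ≤ d)
    (σ : ℝ) (hσ : σ = 2 * Real.pi ^ ((d : ℝ) / 2) / Real.Gamma ((d : ℝ) / 2))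
    (R : ℝ → ℝ)
    (hsmooth : ContDiffOn ℝ (⊤ : ℕ∞) R (Ioi 0))
    (hpos : ∀ ρ : ℝ, 0 < ρ → 0 < R ρ)
    (hR' : ∀ ρ : ℝ, 0 < ρ → deriv R ρ < 0)
    (hconv : ∀ ρ : ℝ, 0 < ρ → 0 ≤ ρ * deriv (deriv R) ρ - deriv R ρ)
    (hnorm : σ * ∫ ρ in Ioi (0 : ℝ), |deriv R ρ| * ρ ^ d = (d : ℝ)) :
    2 * σ * (∫ ρ in Ioi (0 : ℝ),
        |deriv R ρ| ^ 2 / |deriv (fun s : ℝ => s ^ (1 - (d : ℝ)) * deriv R s) ρ|)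
      ≤ 2 * (d : ℝ) / ((d : ℝ) - 2) := by
  have hd2 : (2 : ℝ) < (d : ℝ) := by
    have : (3 : ℝ) ≤ (d : ℝ) := by exact_mod_cast hd
    linarith
  have hσpos : 0 < σ := by
    rw [hσ]
    exact div_pos (by positivity) (Real.Gamma_pos_of_pos (by positivity))
  -- deriv R is differentiable on Ioi 0
  have hinf : ContDiffOn ℝ (⊤ : ℕ∞) R (Ioi 0) := hsmooth.of_le (by simp)
  have hR'smooth : ContDiffOn ℝ (⊤ : ℕ∞) (deriv R) (Ioi 0) :=
    ((contDiffOn_infty_iff_deriv_of_isOpen isOpen_Ioi).1 hinf).2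
  have hR'diff : ∀ ρ : ℝ, 0 < ρ → DifferentiableAt ℝ (deriv R) ρ := by
    intro ρ hρ
    exact (hR'smooth.contDiffAt (isOpen_Ioi.mem_nhds hρ)).differentiableAt (by norm_num)
  -- compute the derivative of s ↦ s^(1-d) * R' s
  have hderiv : ∀ ρ : ℝ, 0 < ρ →
      deriv (fun s : ℝ => s ^ (1 - (d : ℝ)) * deriv R s) ρ
        = ρ ^ (-(d : ℝ)) * ((1 - (d : ℝ)) * deriv R ρ + ρ * deriv (deriv R) ρ) := by
    intro ρ hρ
    have h1 : HasDerivAt (fun s : ℝ => s ^ (1 - (d : ℝ)))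
        ((1 - (d : ℝ)) * ρ ^ ((1 - (d : ℝ)) - 1)) ρ :=
      Real.hasDerivAt_rpow_const (Or.inl hρ.ne')
    have h2 : HasDerivAt (deriv R) (deriv (deriv R) ρ) ρ := (hR'diff ρ hρ).hasDerivAt
    have h3 : deriv (fun s : ℝ => s ^ (1 - (d : ℝ)) * deriv R s) ρ
        = (1 - (d : ℝ)) * ρ ^ ((1 - (d : ℝ)) - 1) * deriv R ρ + ρ ^ (1 - (d : ℝ)) * deriv (deriv R) ρ :=
      (h1.mul h2).deriv
    rw [h3]
    have e1 : ρ ^ ((1 - (d : ℝ)) - 1) = ρ ^ (-(d : ℝ)) := by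
      rw [show (1 - (d : ℝ)) - 1 = -(d : ℝ) by ring]
    have e2 : ρ ^ ((1 : ℝ) - (d : ℝ)) = ρ ^ (-(d : ℝ)) * ρ := by
      rw [show (1 : ℝ) - (d : ℝ) = -(d : ℝ) + 1 by ring, Real.rpow_add hρ, Real.rpow_one]
    rw [e1, e2]
    ring
  -- pointwise bound
  set D : ℝ → ℝ := fun ρ => deriv (fun s : ℝ => s ^ (1 - (d : ℝ)) * deriv R s) ρ with hD
  have hbound : ∀ ρ : ℝ, ρ ∈ Ioi (0 : ℝ) →
      |deriv R ρ| ^ 2 / |D ρ| ≤ (|deriv R ρ| * ρ ^ d) / ((d : ℝ) - 2) := by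
    intro ρ hρ
    rw [mem_Ioi] at hρ
    have hr := hR' ρ hρ
    have habs : |deriv R ρ| = -deriv R ρ := abs_of_neg hr
    have hrpow : (0 : ℝ) < ρ ^ (-(d : ℝ)) := Real.rpow_pos_of_pos hρ _
    have hDval : D ρ = ρ ^ (-(d : ℝ)) * ((1 - (d : ℝ)) * deriv R ρ + ρ * deriv (deriv R) ρ) :=
      hderiv ρ hρ
    have hDge : ((d : ℝ) - 2) * ρ ^ (-(d : ℝ)) * (-deriv R ρ) ≤ D ρ := by
      rw [hDval]
      have h1 : deriv R ρ ≤ ρ * deriv (deriv R) ρ := by linarith [hconv ρ hρ]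
      nlinarith [hrpow, h1]
    have hDpos : 0 < D ρ := by
      refine lt_of_lt_of_le ?_ hDge
      have : 0 < -deriv R ρ := by linarith
      have : 0 < (d : ℝ) - 2 := by linarith
      positivity
    have habsD : |D ρ| = D ρ := abs_of_pos hDpos
    rw [habsD]
    have hkey : ((d : ℝ) - 2) * ρ ^ (-(d : ℝ)) * |deriv R ρ| ≤ D ρ := by
      rw [habs]; exact hDge
    have hnum : (0 : ℝ) ≤ |deriv R ρ| ^ 2 := sq_nonneg _
    have hden : (0 : ℝ) < ((d : ℝ) - 2) * ρ ^ (-(d : ℝ)) * |deriv R ρ| := by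
      have h1 : (0 : ℝ) < |deriv R ρ| := abs_pos.2 hr.ne
      have h2 : 0 < (d : ℝ) - 2 := by linarith
      positivity
    calc |deriv R ρ| ^ 2 / D ρ
        ≤ |deriv R ρ| ^ 2 / (((d : ℝ) - 2) * ρ ^ (-(d : ℝ)) * |deriv R ρ|) :=
          div_le_div_of_nonneg_left hnum hden hkey
      _ = (|deriv R ρ| * ρ ^ d) / ((d : ℝ) - 2) := by
          have habspos : (0 : ℝ) < |deriv R ρ| := abs_pos.2 hr.ne
          have hrn : ρ ^ (-(d : ℝ)) = (ρ ^ d)⁻¹ := by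
            rw [Real.rpow_neg hρ.le, Real.rpow_natCast]
          rw [hrn]
          have hpd : (0 : ℝ) < ρ ^ d := by positivity
          have h2 : ((d : ℝ) - 2) ≠ 0 := by linarith
          rw [sq]
          field_simp
  -- integrability of the dominating function
  have hf_int : IntegrableOn (fun ρ => |deriv R ρ| * ρ ^ d) (Ioi (0 : ℝ)) := by
    by_contra hni
    rw [IntegrableOn] at hni
    rw [integral_undef hni] at hnorm
    have : (d : ℝ) = 0 := by linarith
    have : d = 0 := by exact_mod_cast this
    omega
  have hg_int : IntegrableOn (fun ρ => (|deriv R ρ| * ρ ^ d) / ((d : ℝ) - 2)) (Ioi (0 : ℝ)) :=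
    hf_int.div_const _
  -- monotonicity of the integral
  have hmono : (∫ ρ in Ioi (0 : ℝ), |deriv R ρ| ^ 2 / |D ρ|)
      ≤ ∫ ρ in Ioi (0 : ℝ), (|deriv R ρ| * ρ ^ d) / ((d : ℝ) - 2) := by
    apply integral_mono_of_nonneg
    · filter_upwards with ρ
      positivity
    · exact hg_int
    · filter_upwards [ae_restrict_mem measurableSet_Ioi] with ρ hρ
      exact hbound ρ hρ
  have hval : (∫ ρ in Ioi (0 : ℝ), (|deriv R ρ| * ρ ^ d) / ((d : ℝ) - 2))
      = ((d : ℝ) / σ) / ((d : ℝ) - 2) := by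
    rw [integral_div]
    congr 1
    have hσne : σ ≠ 0 := hσpos.ne'
    field_simp
    linarith [hnorm]
  rw [hval] at hmono
  have : 2 * σ * (∫ ρ in Ioi (0 : ℝ), |deriv R ρ| ^ 2 / |D ρ|)
      ≤ 2 * σ * (((d : ℝ) / σ) / ((d : ℝ) - 2)) := by
    apply mul_le_mul_of_nonneg_left hmono (by positivity)
  calc 2 * σ * (∫ ρ in Ioi (0 : ℝ), |deriv R ρ| ^ 2 / |D ρ|)
      ≤ 2 * σ * (((d : ℝ) / σ) / ((d : ℝ) - 2)) := this
    _ = 2 * (d : ℝ) / ((d : ℝ) - 2) := by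
        have hσne : σ ≠ 0 := hσpos.ne'
        have h2 : ((d : ℝ) - 2) ≠ 0 := by linarith
        field_simp
end

section
/- For d ≥ 3 and h = h(d) with h(d)/√d → c ∈ (0,∞), setting τ₀ = (d-α)/2 - 1 with fixed α ∈ (0,2), there exists δ > 0 independent of d such that min_{τ ∈ [τ₀, τ₀+h]} e^{-τ} τ^{(d-α)/2 - 1} ≥ δ · max_{τ > 0} e^{-τ} τ^{(d-α)/2 - 1} for all sufficiently large d. -/
/-!
For `p > 0` put `f(τ) = e^{-τ} τ^p`. The bound `log x ≥ 1 - 1/x` at `x = τ/p` gives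
`log f(τ) - log f(p) = p log(τ/p) - (τ - p) ≥ -(τ - p)²/τ`, so on `[p, p + w]` the function stays
within the factor `e^{-w²/p}` of `f(p)`. With `p = (d - α)/2 - 1 ≥ d/4` and `w = h(d) ≤ (c + 1)√d`
for large `d`, this factor is at least `e^{-4(c+1)²}`.
-/

open Real Filter Set

theorem neg_sq_div_le_mul_log_div_sub {p τ : ℝ} (hp : 0 < p) (hτ : 0 < τ) :
    -((τ - p) ^ 2 / τ) ≤ p * log (τ / p) - (τ - p) := by
  have hlog : 1 - p / τ ≤ log (τ / p) := by
    simpa only [inv_div] using one_sub_inv_le_log_of_pos (div_pos hτ hp)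
  have hsq : (τ - p) ^ 2 / τ = τ - 2 * p + p * (p / τ) := by
    field_simp
    ring
  rw [hsq]
  nlinarith [mul_le_mul_of_nonneg_left hlog hp.le]

theorem exp_neg_sq_div_mul_le_exp_neg_mul_rpow {p τ : ℝ} (hp : 0 < p) (hτ : 0 < τ) :
    exp (-((τ - p) ^ 2 / τ)) * (exp (-p) * p ^ p) ≤ exp (-τ) * τ ^ p := by
  rw [rpow_def_of_pos hp, rpow_def_of_pos hτ, ← exp_add, ← exp_add, ← exp_add, exp_le_exp]
  have := neg_sq_div_le_mul_log_div_sub hp hτ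
  rw [log_div hτ.ne' hp.ne'] at this
  linarith

theorem exp_neg_mul_le_exp_neg_mul_rpow_of_mem_Icc {p τ w K : ℝ} (hp : 0 < p)
    (hτ : τ ∈ Icc p (p + w)) (hw : w ^ 2 ≤ K * p) :
    exp (-K) * (exp (-p) * p ^ p) ≤ exp (-τ) * τ ^ p := by
  obtain ⟨hpτ, hτw⟩ := hτ
  have hgap : (τ - p) ^ 2 / τ ≤ K :=
    calc (τ - p) ^ 2 / τ ≤ (τ - p) ^ 2 / p := by gcongr
      _ ≤ w ^ 2 / p := by gcongr; linarith
      _ ≤ K := (div_le_iff₀ hp).mpr hw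
  calc exp (-K) * (exp (-p) * p ^ p)
      ≤ exp (-((τ - p) ^ 2 / τ)) * (exp (-p) * p ^ p) := by gcongr
    _ ≤ exp (-τ) * τ ^ p := exp_neg_sq_div_mul_le_exp_neg_mul_rpow hp (hp.trans_le hpτ)

theorem window_lower_bound_general (α : ℝ)
    (h : ℕ → ℝ) (c : ℝ)
    (hh : Tendsto (fun d : ℕ => h d / Real.sqrt d) atTop (nhds c)) :
    ∃ δ : ℝ, 0 < δ ∧ ∀ᶠ d : ℕ in atTop,
      ∀ τ ∈ Icc (((d : ℝ) - α) / 2 - 1) ((((d : ℝ) - α) / 2 - 1) + h d),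
        δ * (Real.exp (-((((d : ℝ) - α) / 2 - 1))) *
            ((((d : ℝ) - α) / 2 - 1) ^ (((d : ℝ) - α) / 2 - 1))) ≤
          Real.exp (-τ) * τ ^ (((d : ℝ) - α) / 2 - 1) := by
  refine ⟨exp (-(4 * (c + 1) ^ 2)), exp_pos _, ?_⟩
  have hratio : ∀ᶠ d : ℕ in atTop, h d / √d < c + 1 := hh.eventually_lt_const (lt_add_one c)
  have hlarge : ∀ᶠ d : ℕ in atTop, max (2 * α + 4) 1 ≤ (d : ℝ) :=
    tendsto_natCast_atTop_atTop.eventually_ge_atTop _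
  filter_upwards [hratio, hlarge] with d hd_ratio hd_large τ hτ
  rw [max_le_iff] at hd_large
  have hsqrt : 0 < √(d : ℝ) := sqrt_pos.mpr (by linarith)
  have hp : (d : ℝ) / 4 ≤ ((d : ℝ) - α) / 2 - 1 := by linarith
  have hw_nonneg : 0 ≤ h d := by linarith [hτ.1, hτ.2]
  have hw : h d ≤ (c + 1) * √d := by linarith [(div_lt_iff₀ hsqrt).mp hd_ratio]
  refine exp_neg_mul_le_exp_neg_mul_rpow_of_mem_Icc (by linarith) hτ ?_
  calc h d ^ 2 ≤ ((c + 1) * √d) ^ 2 := by gcongr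
    _ = (c + 1) ^ 2 * d := by rw [mul_pow, sq_sqrt (by linarith)]
    _ ≤ 4 * (c + 1) ^ 2 * (((d : ℝ) - α) / 2 - 1) := by nlinarith [sq_nonneg (c + 1)]

/-- For fixed `α ∈ (0,2)` and a window width `h(d)` with `h(d)/√d → c > 0`, there is
`δ > 0` independent of `d` such that, with `τ₀ = (d-α)/2 - 1`, for all large `d`,
`min_{τ ∈ [τ₀,τ₀+h(d)]} e^{-τ}τ^{(d-α)/2-1} ≥ δ · max_{τ>0} e^{-τ}τ^{(d-α)/2-1}`,
the maximum being attained at `τ₀`. -/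
theorem window_lower_bound (α : ℝ) (hα : 0 < α) (hα2 : α < 2)
    (h : ℕ → ℝ) (c : ℝ) (hc : 0 < c)
    (hh : Tendsto (fun d : ℕ => h d / Real.sqrt d) atTop (nhds c)) :
    ∃ δ : ℝ, 0 < δ ∧ ∀ᶠ d : ℕ in atTop,
      ∀ τ ∈ Icc (((d : ℝ) - α) / 2 - 1) ((((d : ℝ) - α) / 2 - 1) + h d),
        δ * (Real.exp (-((((d : ℝ) - α) / 2 - 1))) *
            ((((d : ℝ) - α) / 2 - 1) ^ (((d : ℝ) - α) / 2 - 1))) ≤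
          Real.exp (-τ) * τ ^ (((d : ℝ) - α) / 2 - 1) :=
  window_lower_bound_general α h c hh
end
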